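/- Let u ∈ ℝⁿ, λ > 0, and let s̃ ≥ 1 be an integer such that 4 ρ₊(A, s̃) ‖Au‖₂² / λ² < s̃. Then the number of coordinates j with |(AᵀAu)_j| ≥ λ/2 is at most 4 ρ₊(A, s̃) ‖Au‖₂² / λ². -/

import Mathlib

/-! Testing the Rayleigh quotient of `ρ₊(A, s)` at `x = (AᵀAu)_S` for a set `S` of at most `s`
coordinates gives `‖(AᵀAu)_S‖₂⁴ = ⟨Ax, Au⟩² ≤ ρ₊(A, s) ‖(AᵀAu)_S‖₂² ‖Au‖₂²`, hence
`|S| λ²/4 ≤ ‖(AᵀAu)_S‖₂² ≤ ρ₊(A, s) ‖Au‖₂²` when all coordinates in `S` are at least `λ/2`.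
If more than `s̃` coordinates were large, `s̃` of them would contradict the hypothesis. -/

open scoped BigOperators
open Matrix

noncomputable section

namespace PGH

/-- Euclidean dot product on `Fin n → ℝ`. -/
def dot {n : ℕ} (x y : Fin n → ℝ) : ℝ := ∑ i, x i * y i

/-- Squared Euclidean norm. -/
def sqnorm {n : ℕ} (x : Fin n → ℝ) : ℝ := ∑ i, (x i) ^ 2

/-- Euclidean (ℓ₂) norm. -/
noncomputable def l2 {n : ℕ} (x : Fin n → ℝ) : ℝ := Real.sqrt (sqnorm x)

/-- ℓ₁ norm. -/
def l1 {n : ℕ} (x : Fin n → ℝ) : ℝ := ∑ i, |x i|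

/-- ℓ∞ norm (maximum absolute coordinate). -/
noncomputable def linf {n : ℕ} (x : Fin n → ℝ) : ℝ := ⨆ i, |x i|

/-- Support of a vector. -/
def supp {n : ℕ} (x : Fin n → ℝ) : Finset (Fin n) := Finset.univ.filter (fun i => x i ≠ 0)

/-- Number of nonzero coordinates. -/
def l0 {n : ℕ} (x : Fin n → ℝ) : ℕ := (supp x).card

/-- Number of nonzero coordinates within the index set `S`
(i.e. `‖x_S‖₀` for the restriction of `x` to `S`). -/
def l0on {n : ℕ} (S : Finset (Fin n)) (x : Fin n → ℝ) : ℕ :=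
  (S.filter (fun i => x i ≠ 0)).card

/-- ℓ₁ norm of the restriction of `x` to the index set `S`. -/
def l1on {n : ℕ} (S : Finset (Fin n)) (x : Fin n → ℝ) : ℝ := ∑ i ∈ S, |x i|

/-- Gradient of `f(x) = (1/2)‖Ax - b‖₂²`, namely `Aᵀ(Ax - b)`. -/
def grad {m n : ℕ} (A : Matrix (Fin m) (Fin n) ℝ) (b : Fin m → ℝ) (x : Fin n → ℝ) :
    Fin n → ℝ :=
  Aᵀ.mulVec (A.mulVec x - b)

/-- Least-squares objective `f(x) = (1/2)‖Ax - b‖₂²`. -/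
def fls {m n : ℕ} (A : Matrix (Fin m) (Fin n) ℝ) (b : Fin m → ℝ) (x : Fin n → ℝ) : ℝ :=
  sqnorm (A.mulVec x - b) / 2

/-- ℓ₁-regularized least-squares objective `φ_λ(x) = f(x) + λ‖x‖₁`. -/
def phi {m n : ℕ} (A : Matrix (Fin m) (Fin n) ℝ) (b : Fin m → ℝ) (lam : ℝ)
    (x : Fin n → ℝ) : ℝ :=
  fls A b x + lam * l1 x

/-- Restricted maximal eigenvalue `ρ₊(A, s)`. -/
noncomputable def rhoPlus {m n : ℕ} (A : Matrix (Fin m) (Fin n) ℝ) (s : ℕ) : ℝ :=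
  sSup {r | ∃ x : Fin n → ℝ, x ≠ 0 ∧ l0 x ≤ s ∧ r = sqnorm (A.mulVec x) / sqnorm x}

/-- Restricted minimal eigenvalue `ρ₋(A, s)`. -/
noncomputable def rhoMinus {m n : ℕ} (A : Matrix (Fin m) (Fin n) ℝ) (s : ℕ) : ℝ :=
  sInf {r | ∃ x : Fin n → ℝ, x ≠ 0 ∧ l0 x ≤ s ∧ r = sqnorm (A.mulVec x) / sqnorm x}

/-- `ξ` is a subgradient of the ℓ₁ norm at `x`. -/
def IsSubgrad {n : ℕ} (x ξ : Fin n → ℝ) : Prop :=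
  ∀ i, (x i ≠ 0 → ξ i = Real.sign (x i)) ∧ (x i = 0 → |ξ i| ≤ 1)

/-- Optimality residue `ω_λ(x) = min_{ξ ∈ ∂‖x‖₁} ‖Aᵀ(Ax−b) + λξ‖_∞`. -/
noncomputable def omega {m n : ℕ} (A : Matrix (Fin m) (Fin n) ℝ) (b : Fin m → ℝ)
    (lam : ℝ) (x : Fin n → ℝ) : ℝ :=
  sInf {r | ∃ ξ : Fin n → ℝ, IsSubgrad x ξ ∧
    r = linf (fun i => grad A b x i + lam * ξ i)}

/-- The local model `ψ_{λ,L}(y; x)`. -/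
def psi {m n : ℕ} (A : Matrix (Fin m) (Fin n) ℝ) (b : Fin m → ℝ) (lam L : ℝ)
    (y x : Fin n → ℝ) : ℝ :=
  fls A b y + dot (grad A b y) (x - y) + L / 2 * sqnorm (x - y) + lam * l1 x

/-- The noise-domination condition
`λ ≥ max{4, (γ+1)/((1−δ')γ−(1+δ'))} ⬝ ‖Aᵀz‖_∞`. -/
def noiseCond {m n : ℕ} (A : Matrix (Fin m) (Fin n) ℝ) (z : Fin m → ℝ)
    (dp gam lam : ℝ) : Prop :=
  lam ≥ max 4 ((gam + 1) / ((1 - dp) * gam - (1 + dp))) * linf (Aᵀ.mulVec z)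

lemma sqnorm_nonneg {n : ℕ} (x : Fin n → ℝ) : 0 ≤ sqnorm x :=
  Finset.sum_nonneg fun _ _ => sq_nonneg _

lemma sqnorm_pos {n : ℕ} {x : Fin n → ℝ} (hx : x ≠ 0) : 0 < sqnorm x := by
  obtain ⟨i, hi⟩ := Function.ne_iff.mp hx
  exact Finset.sum_pos' (fun j _ => sq_nonneg (x j)) ⟨i, Finset.mem_univ i, sq_pos_of_ne_zero hi⟩

lemma sq_dotProduct_le_sqnorm_mul_sqnorm {n : ℕ} (x y : Fin n → ℝ) :
    (x ⬝ᵥ y) ^ 2 ≤ sqnorm x * sqnorm y :=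
  Finset.sum_mul_sq_le_sq_mul_sq Finset.univ x y

lemma sqnorm_mulVec_le_frobenius {m n : ℕ} (A : Matrix (Fin m) (Fin n) ℝ) (x : Fin n → ℝ) :
    sqnorm (A *ᵥ x) ≤ (∑ i, ∑ j, A i j ^ 2) * sqnorm x := by
  rw [sqnorm, Finset.sum_mul]
  exact Finset.sum_le_sum fun i _ => sq_dotProduct_le_sqnorm_mul_sqnorm (A i) x

section RhoPlus

variable {m n : ℕ} (A : Matrix (Fin m) (Fin n) ℝ) (s : ℕ)

lemma bddAbove_rayleigh_quotients :
    BddAbove {r | ∃ x : Fin n → ℝ, x ≠ 0 ∧ l0 x ≤ s ∧ r = sqnorm (A *ᵥ x) / sqnorm x} := by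
  refine ⟨∑ i, ∑ j, A i j ^ 2, ?_⟩
  rintro r ⟨x, hx, -, rfl⟩
  exact (div_le_iff₀ (sqnorm_pos hx)).mpr (sqnorm_mulVec_le_frobenius A x)

lemma rhoPlus_nonneg : 0 ≤ rhoPlus A s :=
  Real.sSup_nonneg fun _ ⟨_, _, _, hr⟩ => hr ▸ div_nonneg (sqnorm_nonneg _) (sqnorm_nonneg _)

lemma sqnorm_mulVec_le_rhoPlus_mul {x : Fin n → ℝ} (hx : l0 x ≤ s) :
    sqnorm (A *ᵥ x) ≤ rhoPlus A s * sqnorm x := by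
  rcases eq_or_ne x 0 with rfl | hx0
  · simp [sqnorm]
  rw [← div_le_iff₀ (sqnorm_pos hx0)]
  exact le_csSup (bddAbove_rayleigh_quotients A s) ⟨x, hx0, hx, rfl⟩

lemma sum_sq_transpose_mulVec_le (w : Fin m → ℝ) {S : Finset (Fin n)} (hS : S.card ≤ s) :
    ∑ j ∈ S, (Aᵀ *ᵥ w) j ^ 2 ≤ rhoPlus A s * sqnorm w := by
  set v := Aᵀ *ᵥ w
  set x : Fin n → ℝ := fun j => if j ∈ S then v j else 0
  have hx : l0 x ≤ s := le_trans (Finset.card_le_card fun j hj => by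
    by_contra hjS; simp [supp, x, hjS] at hj) hS
  have hxv : x ⬝ᵥ v = ∑ j ∈ S, v j ^ 2 := by
    simp [dotProduct, x, sq, Finset.sum_ite_mem]
  have hxx : sqnorm x = ∑ j ∈ S, v j ^ 2 := by
    simp [sqnorm, x, ite_pow, Finset.sum_ite_mem]
  have hsq : (∑ j ∈ S, v j ^ 2) ^ 2 ≤ rhoPlus A s * (∑ j ∈ S, v j ^ 2) * sqnorm w :=
    calc (∑ j ∈ S, v j ^ 2) ^ 2 = (A *ᵥ x ⬝ᵥ w) ^ 2 := by
          rw [← hxv, dotProduct_mulVec, vecMul_transpose]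
      _ ≤ sqnorm (A *ᵥ x) * sqnorm w := sq_dotProduct_le_sqnorm_mul_sqnorm _ _
      _ ≤ rhoPlus A s * sqnorm x * sqnorm w := by
          gcongr
          · exact sqnorm_nonneg w
          · exact sqnorm_mulVec_le_rhoPlus_mul A s hx
      _ = rhoPlus A s * (∑ j ∈ S, v j ^ 2) * sqnorm w := by rw [hxx]
  have := mul_nonneg (rhoPlus_nonneg A s) (sqnorm_nonneg w)
  nlinarith [Finset.sum_nonneg fun j (_ : j ∈ S) => sq_nonneg (v j)]

end RhoPlus

lemma card_le_of_forall_subset_card_le {α : Type*} (T : Finset α) (s : ℕ) {K : ℝ}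
    (hK : K < s) (h : ∀ S ⊆ T, S.card ≤ s → (S.card : ℝ) ≤ K) : (T.card : ℝ) ≤ K := by
  by_cases hT : T.card ≤ s
  · exact h T subset_rfl hT
  obtain ⟨S, hST, hS⟩ := Finset.exists_subset_card_eq (le_of_not_ge hT)
  exact absurd (hS ▸ h S hST hS.le) hK.not_ge

theorem stmt13_general {m n : ℕ} (A : Matrix (Fin m) (Fin n) ℝ)
    (u : Fin n → ℝ) (lam : ℝ) (hlam : 0 < lam) (st : ℕ)
    (hsmall : 4 * rhoPlus A st * sqnorm (A.mulVec u) / lam ^ 2 < (st : ℝ)) :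
    ((Finset.univ.filter (fun j : Fin n => lam / 2 ≤ |Aᵀ.mulVec (A.mulVec u) j|)).card : ℝ)
      ≤ 4 * rhoPlus A st * sqnorm (A.mulVec u) / lam ^ 2 := by
  refine card_le_of_forall_subset_card_le _ st hsmall fun S hST hS => ?_
  have hlarge : ∀ j ∈ S, (lam / 2) ^ 2 ≤ (Aᵀ *ᵥ (A *ᵥ u)) j ^ 2 := fun j hj => by
    simpa only [sq_abs] using pow_le_pow_left₀ (by positivity) (Finset.mem_filter.mp (hST hj)).2 2
  have hbound : S.card * (lam / 2) ^ 2 ≤ rhoPlus A st * sqnorm (A *ᵥ u) := by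
    simpa using (Finset.card_nsmul_le_sum S _ _ hlarge).trans
      (sum_sq_transpose_mulVec_le A st (A *ᵥ u) hS)
  rw [le_div_iff₀ (by positivity)]
  linarith

theorem stmt13 {m n : ℕ} (A : Matrix (Fin m) (Fin n) ℝ)
    (u : Fin n → ℝ) (lam : ℝ) (hlam : 0 < lam) (st : ℕ) (hst : 1 ≤ st)
    (hsmall : 4 * rhoPlus A st * sqnorm (A.mulVec u) / lam ^ 2 < (st : ℝ)) :
    ((Finset.univ.filter (fun j : Fin n => lam / 2 ≤ |Aᵀ.mulVec (A.mulVec u) j|)).card : ℝ)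
      ≤ 4 * rhoPlus A st * sqnorm (A.mulVec u) / lam ^ 2 :=
  stmt13_general A u lam hlam st hsmall

end PGH
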